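/- arXiv:1705.02948 — 5 statements merged into one kernel-verified Lean document; each statement's English description precedes it below -/
import Mathlib

section
/- Let a ≥ 0 and b, c > 0. Then |ℓ(a/b)·b − ℓ(a/c)·c| ≤ (1 + a/(b ∧ c))·|b − c|, where ℓ(x) = x·log x − x + 1. -/
/-- `ℓ(x) = x log x − x + 1` (with the convention `0·log 0 = 0`). -/
noncomputable def ell (x : ℝ) : ℝ := x * Real.log x - x + 1

lemma ell_mul_eq (a t : ℝ) (ha : 0 ≤ a) (ht : 0 < t) :
    ell (a / t) * t = a * Real.log a - a * Real.log t - a + t := by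
  rcases ha.eq_or_lt with rfl | ha'
  · simp [ell]
  · unfold ell
    rw [Real.log_div (ne_of_gt ha') (ne_of_gt ht)]
    field_simp

lemma log_sub_le (b c : ℝ) (hb : 0 < b) (hc : 0 < c) :
    Real.log b - Real.log c ≤ |b - c| / min b c := by
  have h1 : Real.log b - Real.log c ≤ (b - c) / c := by
    rw [← Real.log_div (ne_of_gt hb) (ne_of_gt hc)]
    have := Real.log_le_sub_one_of_pos (div_pos hb hc)
    have : b / c - 1 = (b - c) / c := by field_simp
    linarith [Real.log_le_sub_one_of_pos (div_pos hb hc)]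
  have h2 : (b - c) / c ≤ |b - c| / min b c :=
    div_le_div₀ (abs_nonneg _) (le_abs_self _) (lt_min hb hc) (min_le_right b c)
  linarith

lemma abs_log_sub_le (b c : ℝ) (hb : 0 < b) (hc : 0 < c) :
    |Real.log b - Real.log c| ≤ |b - c| / min b c := by
  rw [abs_le]
  constructor
  · have := log_sub_le c b hc hb
    rw [abs_sub_comm, min_comm] at this
    linarith
  · exact log_sub_le b c hb hc

theorem ell_ratio_lipschitz (a b c : ℝ) (ha : 0 ≤ a) (hb : 0 < b) (hc : 0 < c) :
    |ell (a / b) * b - ell (a / c) * c| ≤ (1 + a / min b c) * |b - c| := by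
  rw [ell_mul_eq a b ha hb, ell_mul_eq a c ha hc]
  have hmin : 0 < min b c := lt_min hb hc
  have key : a * Real.log a - a * Real.log b - a + b -
      (a * Real.log a - a * Real.log c - a + c)
      = (b - c) - a * (Real.log b - Real.log c) := by ring
  rw [key]
  have h1 : |(b - c) - a * (Real.log b - Real.log c)|
      ≤ |b - c| + a * |Real.log b - Real.log c| := by
    calc |(b - c) - a * (Real.log b - Real.log c)|
        ≤ |b - c| + |a * (Real.log b - Real.log c)| := abs_sub _ _
      _ = |b - c| + a * |Real.log b - Real.log c| := by
          rw [abs_mul, abs_of_nonneg ha]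
  have h2 : a * |Real.log b - Real.log c| ≤ a * (|b - c| / min b c) :=
    mul_le_mul_of_nonneg_left (abs_log_sub_le b c hb hc) ha
  have h3 : |b - c| + a * (|b - c| / min b c) = (1 + a / min b c) * |b - c| := by
    field_simp
  linarith
end

section
/- Let μ be a finite Borel measure on a finite-measure interval [0,ζ] (ζ > 0) that is absolutely continuous with respect to Lebesgue measure λ, with density f. Then for any Borel set E ⊆ [0,ζ] and any M ≥ 1, μ(E) ≤ e^M·λ(E) + (1/M)·∫_{[0,ζ]} ℓ(f(z)) dλ(z), where ℓ(x) = x·log x − x + 1. -/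
/-!
Proof idea: `ℓ` is convex with Legendre conjugate `ℓ*(M) = e^M - 1`, so the Fenchel–Young
inequality gives `x M ≤ e^M - 1 + ℓ(x) ≤ M e^M + ℓ(x)` pointwise for `x ≥ 0`. Dividing by `M`,
putting `x = f z` and integrating over `E` gives the bound, after enlarging the domain of the
nonnegative integrand `ℓ ∘ f` from `E` to `[0, ζ]`.
-/

open MeasureTheory

open Real

lemma ell_eq_klFun (x : ℝ) : ell x = InformationTheory.klFun x := by
  rw [ell, InformationTheory.klFun_apply]; ring

lemma ell_nonneg {x : ℝ} (hx : 0 ≤ x) : 0 ≤ ell x :=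
  ell_eq_klFun x ▸ InformationTheory.klFun_nonneg hx

lemma mul_le_exp_sub_one_add_ell {x : ℝ} (hx : 0 ≤ x) (M : ℝ) :
    x * M ≤ exp M - 1 + ell x := by
  rcases hx.eq_or_lt with rfl | hx
  · simp [ell, (exp_pos M).le]
  · have h := add_one_le_exp (M - log x)
    rw [exp_sub, exp_log hx, le_div_iff₀ hx] at h
    rw [ell]
    nlinarith

lemma exp_sub_one_le_mul_exp (M : ℝ) : exp M - 1 ≤ M * exp M := by
  have h := mul_le_mul_of_nonneg_right (one_sub_le_exp_neg M) (exp_pos M).le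
  rw [← exp_add, neg_add_cancel, exp_zero] at h
  linarith

lemma le_exp_add_ell_div {x M : ℝ} (hx : 0 ≤ x) (hM : 0 < M) :
    x ≤ exp M + (1 / M) * ell x := by
  have h := (mul_le_exp_sub_one_add_ell hx M).trans
    (add_le_add_left (exp_sub_one_le_mul_exp M) (ell x))
  calc x ≤ (M * exp M + ell x) / M := (le_div_iff₀ hM).2 h
    _ = exp M + (1 / M) * ell x := by field_simp

lemma setIntegral_le_exp_mul_measureReal_add_entropy {α : Type*} [MeasurableSpace α]
    {μ : Measure α} {f : α → ℝ} {E T : Set α} (hf_nonneg : ∀ z, 0 ≤ f z)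
    (hℓf_int : IntegrableOn (fun z => ell (f z)) T μ) (hET : E ⊆ T) (hE : μ E ≠ ⊤)
    {M : ℝ} (hM : 0 < M) :
    ∫ z in E, f z ∂μ ≤ exp M * μ.real E + (1 / M) * ∫ z in T, ell (f z) ∂μ := by
  have hℓf_intE : IntegrableOn (fun z => ell (f z)) E μ := hℓf_int.mono_set hET
  have hconst : IntegrableOn (fun _ => exp M) E μ := integrableOn_const hE
  calc ∫ z in E, f z ∂μ ≤ ∫ z in E, (exp M + (1 / M) * ell (f z)) ∂μ :=
        integral_mono_of_nonneg (ae_of_all _ hf_nonneg) (hconst.add (hℓf_intE.const_mul _))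
          (ae_of_all _ fun z => le_exp_add_ell_div (hf_nonneg z) hM)
    _ = exp M * μ.real E + (1 / M) * ∫ z in E, ell (f z) ∂μ := by
        rw [integral_add hconst (hℓf_intE.const_mul _), setIntegral_const, integral_const_mul,
          smul_eq_mul, mul_comm]
    _ ≤ exp M * μ.real E + (1 / M) * ∫ z in T, ell (f z) ∂μ := by
        gcongr
        exact ae_of_all _ fun z => ell_nonneg (hf_nonneg z)

theorem measure_le_exp_add_entropy_general (ζ : ℝ) (f : ℝ → ℝ)
    (hf_nonneg : ∀ z, 0 ≤ f z)
    (hℓf_int : IntegrableOn (fun z => ell (f z)) (Set.Icc 0 ζ))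
    (E : Set ℝ) (hEsub : E ⊆ Set.Icc 0 ζ)
    (M : ℝ) (hM : 1 ≤ M) :
    ∫ z in E, f z ≤ Real.exp M * (volume E).toReal
      + (1 / M) * ∫ z in Set.Icc 0 ζ, ell (f z) :=
  setIntegral_le_exp_mul_measureReal_add_entropy hf_nonneg hℓf_int hEsub
    (measure_mono hEsub |>.trans_lt measure_Icc_lt_top).ne (zero_lt_one.trans_le hM)

theorem measure_le_exp_add_entropy (ζ : ℝ) (hζ : 0 < ζ) (f : ℝ → ℝ)
    (hf_nonneg : ∀ z, 0 ≤ f z)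
    (hf_int : IntegrableOn f (Set.Icc 0 ζ))
    (hℓf_int : IntegrableOn (fun z => ell (f z)) (Set.Icc 0 ζ))
    (E : Set ℝ) (hE : MeasurableSet E) (hEsub : E ⊆ Set.Icc 0 ζ)
    (M : ℝ) (hM : 1 ≤ M) :
    ∫ z in E, f z ≤ Real.exp M * (volume E).toReal
      + (1 / M) * ∫ z in Set.Icc 0 ζ, ell (f z) :=
  measure_le_exp_add_entropy_general ζ f hf_nonneg hℓf_int E hEsub M hM
end

section
/- Let f: [0,T] → ℝ be Lebesgue integrable, g: [0,T] → ℝ bounded measurable, and 1_n: [0,T] → {0,1} any sequence of measurable indicator functions. Let Δ_n → 0 with Δ_n > 0. Then ∫_{Δ_n}^{T} 1_n(r)·(1/Δ_n)·∫_{r−Δ_n}^{r} g(s)·(f(r) − f(s)) ds dr → 0 as n → ∞. -/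
/-!
Extend `f` by zero outside `[0, T]` to an integrable `F` on `ℝ`. Substituting `s = r - u` and
applying Tonelli, the `n`-th term is bounded by `Cg` times `sup_{0 ≤ u ≤ Δ n} ‖F - F(· - u)‖₁`,
and this tends to `0` by continuity of translation in `L¹`, which in turn follows by
approximating `F` in `L¹` by a continuous function with compact support.
-/

open MeasureTheory Filter Set Topology
open scoped ENNReal

theorem HasCompactSupport.tendsto_lintegral_enorm_sub_comp_sub
    {E : Type*} [NormedAddCommGroup E] {G : ℝ → E}
    (hG : HasCompactSupport G) (hGc : Continuous G) :
    Tendsto (fun u => ∫⁻ x, ‖G x - G (x - u)‖ₑ) (𝓝 0) (𝓝 0) := by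
  obtain ⟨M, hM⟩ := hG.exists_bound_of_continuous hGc
  set K := Metric.cthickening 1 (tsupport G)
  have hK : IsCompact K := hG.cthickening
  have hcont : ∀ u : ℝ, Continuous fun x => ‖G x - G (x - u)‖ₑ := fun u =>
    (hGc.sub (hGc.comp (continuous_sub_right u))).enorm
  suffices Tendsto (fun u => ∫⁻ x, ‖G x - G (x - u)‖ₑ) (𝓝 0) (𝓝 (∫⁻ _ : ℝ, 0)) by
    simpa using this
  refine tendsto_lintegral_filter_of_dominated_convergence
    (K.indicator fun _ => ENNReal.ofReal (2 * M))
    (Eventually.of_forall fun u => (hcont u).measurable) ?_ ?_ ?_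
  · filter_upwards [Metric.closedBall_mem_nhds (0 : ℝ) one_pos] with u hu
    refine Eventually.of_forall fun x => ?_
    by_cases hx : x ∈ K
    · rw [indicator_of_mem hx, ← ofReal_norm]
      exact ENNReal.ofReal_le_ofReal <|
        (norm_sub_le _ _).trans (by linarith [hM x, hM (x - u)])
    · have hx_out : x ∉ tsupport G := fun h => hx (Metric.self_subset_cthickening _ h)
      have hxu_out : x - u ∉ tsupport G := fun h => hx <|
        Metric.mem_cthickening_of_dist_le x (x - u) 1 _ h (by simpa [dist_eq_norm] using hu)
      simp [image_eq_zero_of_notMem_tsupport hx_out, image_eq_zero_of_notMem_tsupport hxu_out]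
  · rw [lintegral_indicator_const hK.measurableSet]
    exact ENNReal.mul_ne_top ENNReal.ofReal_ne_top hK.measure_lt_top.ne
  · refine Eventually.of_forall fun x => ?_
    simpa using (show Continuous fun u : ℝ => ‖G x - G (x - u)‖ₑ by fun_prop).tendsto 0

theorem MeasureTheory.Integrable.tendsto_lintegral_enorm_sub_comp_sub
    {E : Type*} [NormedAddCommGroup E] [NormedSpace ℝ E] {F : ℝ → E} (hF : Integrable F) :
    Tendsto (fun u => ∫⁻ x, ‖F x - F (x - u)‖ₑ) (𝓝 0) (𝓝 0) := by
  rw [ENNReal.tendsto_nhds_zero]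
  intro ε hε
  have hε3 : ε / 3 ≠ 0 := (ENNReal.div_pos hε.ne' ENNReal.ofNat_ne_top).ne'
  obtain ⟨G, hG, hFG, hGc, -⟩ := hF.exists_hasCompactSupport_lintegral_sub_le hε3
  filter_upwards [ENNReal.tendsto_nhds_zero.1
    (hG.tendsto_lintegral_enorm_sub_comp_sub hGc) _ (pos_iff_ne_zero.2 hε3)] with u hu
  have hGF : ∫⁻ x, ‖G (x - u) - F (x - u)‖ₑ ≤ ε / 3 := by
    rw [lintegral_sub_right_eq_self (fun x => ‖G x - F x‖ₑ) u]
    simpa only [enorm_sub_rev] using hFG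
  calc ∫⁻ x, ‖F x - F (x - u)‖ₑ
      ≤ ∫⁻ x, (‖F x - G x‖ₑ + ‖G x - G (x - u)‖ₑ + ‖G (x - u) - F (x - u)‖ₑ) :=
        lintegral_mono fun x => by
          simpa only [edist_eq_enorm_sub] using edist_triangle4 (F x) (G x) (G (x - u)) (F (x - u))
    _ = (∫⁻ x, ‖F x - G x‖ₑ) + (∫⁻ x, ‖G x - G (x - u)‖ₑ)
          + ∫⁻ x, ‖G (x - u) - F (x - u)‖ₑ := by
        rw [lintegral_add_left' (by fun_prop), lintegral_add_left' (by fun_prop)]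
    _ ≤ ε / 3 + ε / 3 + ε / 3 := add_le_add (add_le_add hFG hu) hGF
    _ = ε := ENNReal.add_thirds ε

theorem tendsto_biSup_Icc_zero {ω : ℝ → ℝ≥0∞} (hω : Tendsto ω (𝓝 0) (𝓝 0)) :
    Tendsto (fun δ => ⨆ u ∈ Icc 0 δ, ω u) (𝓝 0) (𝓝 0) := by
  rw [ENNReal.tendsto_nhds_zero] at hω ⊢
  intro ε hε
  obtain ⟨ρ, hρ, hωρ⟩ := Metric.eventually_nhds_iff.1 (hω ε hε)
  filter_upwards [Metric.ball_mem_nhds (0 : ℝ) hρ] with δ hδ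
  refine iSup₂_le fun u hu => hωρ ?_
  rw [Real.dist_eq, sub_zero, abs_of_nonneg hu.1]
  exact hu.2.trans_lt (le_abs_self δ |>.trans_lt (by simpa [Real.dist_eq] using hδ))

theorem setLIntegral_Icc_sub_eq (φ : ℝ → ℝ≥0∞) (r D : ℝ) :
    ∫⁻ s in Icc (r - D) r, φ s = ∫⁻ u in Icc 0 D, φ (r - u) := by
  have h := (Measure.measurePreserving_sub_left volume r).setLIntegral_comp_emb
    (MeasurableEquiv.subLeft r).measurableEmbedding φ (Icc 0 D)
  rwa [image_const_sub_Icc, sub_zero, eq_comm] at h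

theorem enorm_setIntegral_Icc_mul_sub_le {F g : ℝ → ℝ} {C : ℝ} (hg : ∀ s, |g s| ≤ C)
    (r D : ℝ) :
    ‖∫ s in Icc (r - D) r, g s * (F r - F s)‖ₑ
      ≤ ENNReal.ofReal C * ∫⁻ u in Icc 0 D, ‖F r - F (r - u)‖ₑ := by
  rw [← setLIntegral_Icc_sub_eq (fun s => ‖F r - F s‖ₑ),
    ← lintegral_const_mul' _ _ ENNReal.ofReal_ne_top]
  refine (enorm_integral_le_lintegral_enorm _).trans (lintegral_mono fun s => ?_)
  rw [enorm_mul, ← ofReal_norm, Real.norm_eq_abs]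
  gcongr
  exact hg s

theorem lintegral_setLIntegral_enorm_sub_comp_sub_le {F : ℝ → ℝ} (hF : AEMeasurable F)
    {s : Set ℝ} (hs : MeasurableSet s) :
    ∫⁻ r, ∫⁻ u in s, ‖F r - F (r - u)‖ₑ
      ≤ volume s * ⨆ u ∈ s, ∫⁻ r, ‖F r - F (r - u)‖ₑ := by
  have hsub : AEMeasurable (fun p : ℝ × ℝ => F (p.1 - p.2)) (volume.prod (volume.restrict s)) :=
    hF.comp_quasiMeasurePreserving (quasiMeasurePreserving_sub_of_right_invariant _ _)
  rw [lintegral_lintegral_swap (hF.comp_fst.sub hsub).enorm]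
  calc ∫⁻ u in s, ∫⁻ r, ‖F r - F (r - u)‖ₑ
      ≤ ∫⁻ _ in s, ⨆ u ∈ s, ∫⁻ r, ‖F r - F (r - u)‖ₑ :=
        setLIntegral_mono' hs fun u hu =>
          le_iSup₂ (f := fun u (_ : u ∈ s) => ∫⁻ r, ‖F r - F (r - u)‖ₑ) u hu
    _ = volume s * ⨆ u ∈ s, ∫⁻ r, ‖F r - F (r - u)‖ₑ := by
        rw [setLIntegral_const, mul_comm]

theorem enorm_setIntegral_sliding_average_le {F g w : ℝ → ℝ} (hF : AEMeasurable F) {C : ℝ}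
    (hg : ∀ s, |g s| ≤ C) (hw : ∀ r, |w r| ≤ 1) {D : ℝ} (hD : 0 < D) (S : Set ℝ) :
    ‖∫ r in S, w r * ((1 / D) * ∫ s in Icc (r - D) r, g s * (F r - F s))‖ₑ
      ≤ ENNReal.ofReal C * ⨆ u ∈ Icc 0 D, ∫⁻ r, ‖F r - F (r - u)‖ₑ := by
  have hpoint : ∀ r, ‖w r * ((1 / D) * ∫ s in Icc (r - D) r, g s * (F r - F s))‖ₑ
      ≤ ENNReal.ofReal (1 / D) * ENNReal.ofReal C * ∫⁻ u in Icc 0 D, ‖F r - F (r - u)‖ₑ := by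
    intro r
    rw [enorm_mul, enorm_mul, Real.enorm_eq_ofReal_abs, Real.enorm_eq_ofReal_abs,
      abs_of_pos (one_div_pos.2 hD)]
    calc _ ≤ 1 * (ENNReal.ofReal (1 / D)
          * (ENNReal.ofReal C * ∫⁻ u in Icc 0 D, ‖F r - F (r - u)‖ₑ)) := by
          gcongr
          · exact ENNReal.ofReal_le_one.2 (hw r)
          · exact enorm_setIntegral_Icc_mul_sub_le hg r D
      _ = _ := by rw [one_mul, mul_assoc]
  calc ‖∫ r in S, w r * ((1 / D) * ∫ s in Icc (r - D) r, g s * (F r - F s))‖ₑ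
      ≤ ∫⁻ r in S, ENNReal.ofReal (1 / D) * ENNReal.ofReal C
          * ∫⁻ u in Icc 0 D, ‖F r - F (r - u)‖ₑ :=
        (enorm_integral_le_lintegral_enorm _).trans (lintegral_mono hpoint)
    _ ≤ ENNReal.ofReal (1 / D) * ENNReal.ofReal C
          * ∫⁻ r, ∫⁻ u in Icc 0 D, ‖F r - F (r - u)‖ₑ := by
        rw [lintegral_const_mul' _ _ (by finiteness)]
        gcongr
        exact Measure.restrict_le_self
    _ ≤ ENNReal.ofReal (1 / D) * ENNReal.ofReal C
          * (ENNReal.ofReal D * ⨆ u ∈ Icc 0 D, ∫⁻ r, ‖F r - F (r - u)‖ₑ) := by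
        gcongr
        calc _ ≤ _ := lintegral_setLIntegral_enorm_sub_comp_sub_le hF measurableSet_Icc
          _ = _ := by rw [Real.volume_Icc, sub_zero]
    _ = ENNReal.ofReal C * ⨆ u ∈ Icc 0 D, ∫⁻ r, ‖F r - F (r - u)‖ₑ := by
        rw [mul_comm (ENNReal.ofReal (1 / D)), mul_assoc, ← mul_assoc (ENNReal.ofReal (1 / D)),
          ← ENNReal.ofReal_mul (one_div_pos.2 hD).le, one_div_mul_cancel hD.ne',
          ENNReal.ofReal_one, one_mul]

theorem setIntegral_Icc_indicator_sliding_average_eq (f g w : ℝ → ℝ) {D T : ℝ} (hD : 0 ≤ D) :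
    ∫ r in Icc D T, w r * ((1 / D) * ∫ s in Icc (r - D) r,
        g s * ((Icc 0 T).indicator f r - (Icc 0 T).indicator f s))
      = ∫ r in Icc D T, w r * ((1 / D) * ∫ s in Icc (r - D) r, g s * (f r - f s)) := by
  refine setIntegral_congr_fun measurableSet_Icc fun r hr => ?_
  have hr' : r ∈ Icc 0 T := ⟨hD.trans hr.1, hr.2⟩
  congr 2
  refine setIntegral_congr_fun measurableSet_Icc fun s hs => ?_
  have hs' : s ∈ Icc 0 T := ⟨by linarith [hs.1, hr.1], hs.2.trans hr.2⟩
  simp only [indicator_of_mem hr', indicator_of_mem hs']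

theorem sliding_average_difference_tendsto_zero_general
    (T : ℝ)
    (f : ℝ → ℝ) (hf_int : IntegrableOn f (Set.Icc 0 T))
    (g : ℝ → ℝ) (Cg : ℝ) (hg_bdd : ∀ s, |g s| ≤ Cg)
    (ind : ℕ → ℝ → ℝ)
    (hind01 : ∀ n r, ind n r = 0 ∨ ind n r = 1)
    (Δ : ℕ → ℝ) (hΔ_pos : ∀ n, 0 < Δ n) (hΔ_lim : Tendsto Δ atTop (nhds 0)) :
    Tendsto (fun n => ∫ r in Set.Icc (Δ n) T,
        ind n r * ((1 / Δ n) * ∫ s in Set.Icc (r - Δ n) r, g s * (f r - f s)))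
      atTop (nhds 0) := by
  set F := (Icc 0 T).indicator f
  have hF : Integrable F := hf_int.integrable_indicator measurableSet_Icc
  have hind : ∀ n r, |ind n r| ≤ 1 := fun n r => by rcases hind01 n r with h | h <;> simp [h]
  have hbound : Tendsto (fun n => ENNReal.ofReal Cg * ⨆ u ∈ Icc 0 (Δ n), ∫⁻ r, ‖F r - F (r - u)‖ₑ)
      atTop (𝓝 0) := by
    simpa using ENNReal.Tendsto.const_mul
      ((tendsto_biSup_Icc_zero hF.tendsto_lintegral_enorm_sub_comp_sub).comp hΔ_lim)
      (Or.inr ENNReal.ofReal_ne_top)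
  rw [tendsto_zero_iff_enorm_tendsto_zero]
  refine tendsto_of_tendsto_of_tendsto_of_le_of_le tendsto_const_nhds hbound
    (fun _ => zero_le) fun n => ?_
  rw [← setIntegral_Icc_indicator_sliding_average_eq f g (ind n) (hΔ_pos n).le]
  exact enorm_setIntegral_sliding_average_le hF.aemeasurable hg_bdd (hind n) (hΔ_pos n) _

theorem sliding_average_difference_tendsto_zero
    (T : ℝ) (hT : 0 < T)
    (f : ℝ → ℝ) (hf_int : IntegrableOn f (Set.Icc 0 T))
    (g : ℝ → ℝ) (hg_meas : Measurable g) (Cg : ℝ) (hg_bdd : ∀ s, |g s| ≤ Cg)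
    (ind : ℕ → ℝ → ℝ) (hind_meas : ∀ n, Measurable (ind n))
    (hind01 : ∀ n r, ind n r = 0 ∨ ind n r = 1)
    (Δ : ℕ → ℝ) (hΔ_pos : ∀ n, 0 < Δ n) (hΔ_lim : Tendsto Δ atTop (nhds 0)) :
    Tendsto (fun n => ∫ r in Set.Icc (Δ n) T,
        ind n r * ((1 / Δ n) * ∫ s in Set.Icc (r - Δ n) r, g s * (f r - f s)))
      atTop (nhds 0) :=
  sliding_average_difference_tendsto_zero_general T f hf_int g Cg hg_bdd ind hind01 Δ hΔ_pos hΔ_lim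
end

section
/- For a Lebesgue integrable f: [0,T] → ℝ and Δ_n → 0+, ∫_{[Δ_n, T]} (1/Δ_n)·∫_{r−Δ_n}^{r} |f(s)| ds dr → ∫_0^T |f(r)| dr as n → ∞. -/
open MeasureTheory Filter

theorem sliding_average_tendsto_integral
    (T : ℝ) (hT : 0 < T)
    (f : ℝ → ℝ) (hf_int : IntegrableOn f (Set.Icc 0 T))
    (Δ : ℕ → ℝ) (hΔ_pos : ∀ n, 0 < Δ n) (hΔ_lt : ∀ n, Δ n < T)
    (hΔ_lim : Tendsto Δ atTop (nhds 0)) :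
    Tendsto (fun n => ∫ r in Set.Icc (Δ n) T,
        (1 / Δ n) * ∫ s in Set.Icc (r - Δ n) r, |f s|)
      atTop (nhds (∫ r in Set.Icc 0 T, |f r|)) := by
  set g : ℝ → ℝ := fun s => |f s| with hgdef
  have hg_int : IntegrableOn g (Set.Icc 0 T) := hf_int.abs
  have hg_nn : ∀ s, 0 ≤ g s := fun s => abs_nonneg _
  set F : ℝ → ℝ := fun r => ∫ s in (0:ℝ)..r, g s with hFdef
  have hsub : ∀ a b : ℝ, a ∈ Set.Icc 0 T → b ∈ Set.Icc 0 T →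
      IntervalIntegrable g volume a b := fun a b ha hb =>
    (hg_int.mono_set (Set.uIcc_subset_Icc ha hb)).intervalIntegrable
  have hFsub : ∀ x y : ℝ, 0 ≤ x → x ≤ y → y ≤ T → F y - F x = ∫ s in x..y, g s := by
    intro x y hx hxy hyT
    exact intervalIntegral.integral_interval_sub_left
      (hsub 0 y ⟨le_refl 0, by linarith⟩ ⟨by linarith, hyT⟩)
      (hsub 0 x ⟨le_refl 0, by linarith⟩ ⟨hx, by linarith⟩)
  have hFmono : ∀ x y : ℝ, 0 ≤ x → x ≤ y → y ≤ T → F x ≤ F y := by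
    intro x y hx hxy hyT
    have h := hFsub x y hx hxy hyT
    have h2 : 0 ≤ ∫ s in x..y, g s :=
      intervalIntegral.integral_nonneg hxy (fun u _ => hg_nn u)
    linarith
  have hFcont : ContinuousOn F (Set.Icc 0 T) := by
    have := intervalIntegral.continuousOn_primitive_interval
      (μ := volume) (a := (0:ℝ)) (b := T) (f := g)
      (by rwa [Set.uIcc_of_le hT.le])
    rwa [Set.uIcc_of_le hT.le] at this
  have hF0 : F 0 = 0 := intervalIntegral.integral_same
  have hFT : (∫ r in Set.Icc 0 T, g r) = F T := by
    rw [MeasureTheory.integral_Icc_eq_integral_Ioc, ← intervalIntegral.integral_of_le hT.le]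
  -- key rewriting of the sequence
  have key : ∀ n, (∫ r in Set.Icc (Δ n) T, (1 / Δ n) * ∫ s in Set.Icc (r - Δ n) r, g s)
      = (1 / Δ n) * ((∫ r in (T - Δ n)..T, F r) - ∫ r in (0:ℝ)..(Δ n), F r) := by
    intro n
    have h0 : 0 < Δ n := hΔ_pos n
    have h1 : Δ n ≤ T := (hΔ_lt n).le
    rw [integral_const_mul]
    congr 1
    have hIcc : ∀ r ∈ Set.Icc (Δ n) T,
        (∫ s in Set.Icc (r - Δ n) r, g s) = F r - F (r - Δ n) := by
      intro r hr
      rw [MeasureTheory.integral_Icc_eq_integral_Ioc,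
        ← intervalIntegral.integral_of_le (by linarith : r - Δ n ≤ r),
        ← hFsub (r - Δ n) r (by linarith [hr.1]) (by linarith) hr.2]
    rw [MeasureTheory.setIntegral_congr_fun measurableSet_Icc hIcc]
    have hint1 : IntervalIntegrable F volume (Δ n) T :=
      ContinuousOn.intervalIntegrable_of_Icc h1
        (hFcont.mono (Set.Icc_subset_Icc h0.le le_rfl))
    have hint0 : IntervalIntegrable F volume 0 (Δ n) :=
      ContinuousOn.intervalIntegrable_of_Icc h0.le
        (hFcont.mono (Set.Icc_subset_Icc le_rfl h1))
    have hint0' : IntervalIntegrable F volume 0 (T - Δ n) :=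
      ContinuousOn.intervalIntegrable_of_Icc (by linarith)
        (hFcont.mono (Set.Icc_subset_Icc le_rfl (by linarith)))
    have hint1' : IntervalIntegrable F volume (T - Δ n) T :=
      ContinuousOn.intervalIntegrable_of_Icc (by linarith)
        (hFcont.mono (Set.Icc_subset_Icc (by linarith) le_rfl))
    have hint2 : IntervalIntegrable (fun r => F (r - Δ n)) volume (Δ n) T := by
      have := hint0'.comp_sub_right (Δ n)
      simpa using this
    rw [MeasureTheory.integral_Icc_eq_integral_Ioc, ← intervalIntegral.integral_of_le h1,
      intervalIntegral.integral_sub hint1 hint2,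
      intervalIntegral.integral_comp_sub_right (fun r => F r) (Δ n)]
    have hsplit1 : (∫ r in (0:ℝ)..(Δ n), F r) + ∫ r in (Δ n)..T, F r
        = ∫ r in (0:ℝ)..T, F r :=
      intervalIntegral.integral_add_adjacent_intervals hint0 hint1
    have hsplit2 : (∫ r in (0:ℝ)..(T - Δ n), F r) + ∫ r in (T - Δ n)..T, F r
        = ∫ r in (0:ℝ)..T, F r :=
      intervalIntegral.integral_add_adjacent_intervals hint0' hint1'
    have hz : Δ n - Δ n = 0 := sub_self _
    rw [hz]
    linarith
  simp only [key]
  rw [hFT]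
  -- limits of the two averaged terms
  have hTm : Tendsto (fun n => T - Δ n) atTop (nhds T) := by
    have := tendsto_const_nhds (x := T) (f := atTop (α := ℕ)) |>.sub hΔ_lim
    simpa using this
  have hmemT : ∀ n, T - Δ n ∈ Set.Icc 0 T := fun n =>
    ⟨by linarith [hΔ_lt n], by linarith [(hΔ_pos n).le]⟩
  have hmem0 : ∀ n, Δ n ∈ Set.Icc 0 T := fun n => ⟨(hΔ_pos n).le, (hΔ_lt n).le⟩
  have hFTm : Tendsto (fun n => F (T - Δ n)) atTop (nhds (F T)) := by
    have hcw : ContinuousWithinAt F (Set.Icc 0 T) T := hFcont T ⟨hT.le, le_rfl⟩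
    exact hcw.tendsto.comp
      (tendsto_nhdsWithin_of_tendsto_nhds_of_eventually_within _ hTm
        (Eventually.of_forall hmemT))
  have hFΔ : Tendsto (fun n => F (Δ n)) atTop (nhds 0) := by
    have hcw : ContinuousWithinAt F (Set.Icc 0 T) 0 := hFcont 0 ⟨le_rfl, hT.le⟩
    have := hcw.tendsto.comp
      (tendsto_nhdsWithin_of_tendsto_nhds_of_eventually_within _ hΔ_lim
        (Eventually.of_forall hmem0))
    rwa [hF0] at this
  set A : ℕ → ℝ := fun n => (1 / Δ n) * ∫ r in (T - Δ n)..T, F r with hA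
  set B : ℕ → ℝ := fun n => (1 / Δ n) * ∫ r in (0:ℝ)..(Δ n), F r with hB
  have hAlim : Tendsto A atTop (nhds (F T)) := by
    apply tendsto_of_tendsto_of_tendsto_of_le_of_le hFTm tendsto_const_nhds
    · intro n
      have h0 : 0 < Δ n := hΔ_pos n
      have hle : T - Δ n ≤ T := by linarith
      have hint : IntervalIntegrable F volume (T - Δ n) T :=
        ContinuousOn.intervalIntegrable_of_Icc hle
          (hFcont.mono (Set.Icc_subset_Icc (hmemT n).1 le_rfl))
      have hb : (T - (T - Δ n)) • F (T - Δ n) ≤ ∫ r in (T - Δ n)..T, F r := by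
        rw [← intervalIntegral.integral_const]
        exact intervalIntegral.integral_mono_on hle intervalIntegrable_const hint
          (fun x hx => hFmono (T - Δ n) x (hmemT n).1 hx.1 hx.2)
      have hb' : Δ n * F (T - Δ n) ≤ ∫ r in (T - Δ n)..T, F r := by
        simpa [smul_eq_mul, sub_sub_cancel] using hb
      have := mul_le_mul_of_nonneg_left hb' (by positivity : (0:ℝ) ≤ 1 / Δ n)
      calc F (T - Δ n) = (1 / Δ n) * (Δ n * F (T - Δ n)) := by field_simp
        _ ≤ A n := this
    · intro n
      have h0 : 0 < Δ n := hΔ_pos n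
      have hle : T - Δ n ≤ T := by linarith
      have hint : IntervalIntegrable F volume (T - Δ n) T :=
        ContinuousOn.intervalIntegrable_of_Icc hle
          (hFcont.mono (Set.Icc_subset_Icc (hmemT n).1 le_rfl))
      have hb : (∫ r in (T - Δ n)..T, F r) ≤ (T - (T - Δ n)) • F T := by
        rw [← intervalIntegral.integral_const]
        exact intervalIntegral.integral_mono_on hle hint intervalIntegrable_const
          (fun x hx => hFmono x T (le_trans (hmemT n).1 hx.1) hx.2 le_rfl)
      have hb' : (∫ r in (T - Δ n)..T, F r) ≤ Δ n * F T := by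
        simpa [smul_eq_mul, sub_sub_cancel] using hb
      have := mul_le_mul_of_nonneg_left hb' (by positivity : (0:ℝ) ≤ 1 / Δ n)
      calc A n ≤ (1 / Δ n) * (Δ n * F T) := this
        _ = F T := by field_simp
  have hBlim : Tendsto B atTop (nhds 0) := by
    apply tendsto_of_tendsto_of_tendsto_of_le_of_le tendsto_const_nhds hFΔ
    · intro n
      have h0 : 0 < Δ n := hΔ_pos n
      have hnn : 0 ≤ ∫ r in (0:ℝ)..(Δ n), F r :=
        intervalIntegral.integral_nonneg h0.le
          (fun x hx => by
            have := hFmono 0 x le_rfl hx.1 (le_trans hx.2 (hΔ_lt n).le)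
            linarith [hF0])
      positivity
    · intro n
      have h0 : 0 < Δ n := hΔ_pos n
      have hint : IntervalIntegrable F volume 0 (Δ n) :=
        ContinuousOn.intervalIntegrable_of_Icc h0.le
          (hFcont.mono (Set.Icc_subset_Icc le_rfl (hΔ_lt n).le))
      have hb : (∫ r in (0:ℝ)..(Δ n), F r) ≤ (Δ n - 0) • F (Δ n) := by
        rw [← intervalIntegral.integral_const]
        exact intervalIntegral.integral_mono_on h0.le hint intervalIntegrable_const
          (fun x hx => hFmono x (Δ n) hx.1 hx.2 (hΔ_lt n).le)
      have hb' : (∫ r in (0:ℝ)..(Δ n), F r) ≤ Δ n * F (Δ n) := by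
        simpa [smul_eq_mul] using hb
      have := mul_le_mul_of_nonneg_left hb' (by positivity : (0:ℝ) ≤ 1 / Δ n)
      calc B n ≤ (1 / Δ n) * (Δ n * F (Δ n)) := this
        _ = F (Δ n) := by field_simp
  have : Tendsto (fun n => A n - B n) atTop (nhds (F T - 0)) := hAlim.sub hBlim
  rw [sub_zero] at this
  refine this.congr (fun n => ?_)
  simp only [hA, hB]
  ring
end

section
/- Let L be a finite set and for each x ∈ ℝ^d let P(x) = (p_{yy'}(x)) be a stochastic matrix on L such that: (i) each x ↦ p_{yy'}(x) is Lipschitz with constant K, and (ii) δ := inf_{x} min_{y,y'} p_{yy'}(x) > 0. Then for each x the chain has a unique stationary distribution π(x), and x ↦ π(x) is Lipschitz continuous in total variation, with Lipschitz constant depending only on K, δ and |L|. -/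
/-!
Doeblin's argument. If every entry in column `y'` of a stochastic matrix `q` is at least `m y'`,
then `v ↦ v ᵥ* q` contracts the ℓ¹ norm of zero-sum vectors by the factor `1 - ∑ m`, because
subtracting the minorant from every row does not change `v ᵥ* q`. Banach's fixed point theorem on
the simplex then gives a unique stationary distribution. For stationary distributions `π, π'` of
`q, q'`, the identity `π - π' = (π - π') ᵥ* q + π' ᵥ* (q - q')` gives
`(∑ m) ‖π - π'‖₁ ≤ |L| · max |q - q'|`; with `m ≡ δ` this is `‖π x - π x'‖₁ ≤ (K / δ) ‖x - x'‖`.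
-/

open Finset Matrix

section Doeblin

variable {L : Type*} [Fintype L] {q q' : Matrix L L ℝ} {m : L → ℝ}

theorem sum_abs_vecMul_le_of_sum_eq_zero (hq : ∀ y, ∑ y', q y y' = 1)
    (hm : ∀ y y', m y' ≤ q y y') {v : L → ℝ} (hv : ∑ y, v y = 0) :
    ∑ y', |(v ᵥ* q) y'| ≤ (1 - ∑ y, m y) * ∑ y, |v y| := by
  have hshift : ∀ y', (v ᵥ* q) y' = ∑ y, v y * (q y y' - m y') := by
    intro y'
    simp only [vecMul, dotProduct, mul_sub, sum_sub_distrib, ← sum_mul, hv, zero_mul, sub_zero]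
  calc ∑ y', |(v ᵥ* q) y'| ≤ ∑ y', ∑ y, |v y| * (q y y' - m y') := by
        gcongr with y'
        rw [hshift]
        refine (abs_sum_le_sum_abs _ _).trans_eq (sum_congr rfl fun y _ => ?_)
        rw [abs_mul, abs_of_nonneg (sub_nonneg.2 (hm y y'))]
    _ = (1 - ∑ y, m y) * ∑ y, |v y| := by
        rw [sum_comm, mul_sum]
        refine sum_congr rfl fun y _ => ?_
        rw [← mul_sum, sum_sub_distrib, hq, mul_comm]

theorem sum_abs_vecMul_le_card_mul {π : L → ℝ} (hπ : π ∈ stdSimplex ℝ L) {A : Matrix L L ℝ}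
    {ε : ℝ} (hA : ∀ y y', |A y y'| ≤ ε) : ∑ y', |(π ᵥ* A) y'| ≤ Fintype.card L * ε := by
  calc ∑ y', |(π ᵥ* A) y'| ≤ ∑ _y' : L, ε := by
        gcongr with y'
        calc |(π ᵥ* A) y'| ≤ ∑ y, π y * |A y y'| := by
              refine (abs_sum_le_sum_abs _ _).trans_eq (sum_congr rfl fun y _ => ?_)
              rw [abs_mul, abs_of_nonneg (hπ.1 y)]
          _ ≤ ∑ y, π y * ε := by
              gcongr with y
              · exact hπ.1 y
              · exact hA y y'
          _ = ε := by rw [← sum_mul, hπ.2, one_mul]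
    _ = Fintype.card L * ε := by simp

theorem mul_sum_abs_sub_le_of_vecMul_eq_self (hq : ∀ y, ∑ y', q y y' = 1)
    (hm : ∀ y y', m y' ≤ q y y') {π π' : L → ℝ} (hπ : ∑ y, π y = 1) (hπ' : π' ∈ stdSimplex ℝ L)
    (hπq : π ᵥ* q = π) (hπq' : π' ᵥ* q' = π') {ε : ℝ} (hε : ∀ y y', |q y y' - q' y y'| ≤ ε) :
    (∑ y, m y) * ∑ y, |π y - π' y| ≤ Fintype.card L * ε := by
  have hdecomp : π - π' = (π - π') ᵥ* q + π' ᵥ* (q - q') := by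
    rw [sub_vecMul, vecMul_sub, hπq, hπq']
    abel
  have htriangle : ∑ y, |π y - π' y| ≤
      ∑ y, |((π - π') ᵥ* q) y| + ∑ y, |(π' ᵥ* (q - q')) y| := by
    refine (sum_le_sum fun y _ => ?_).trans_eq sum_add_distrib
    rw [← Pi.sub_apply π, congrFun hdecomp y]
    exact abs_add_le _ _
  have hcontract := sum_abs_vecMul_le_of_sum_eq_zero hq hm (v := π - π')
    (by simp only [Pi.sub_apply, sum_sub_distrib, hπ, hπ'.2, sub_self])
  have hperturb := sum_abs_vecMul_le_card_mul hπ' (A := q - q') hε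
  simp only [Pi.sub_apply] at hcontract
  linarith

theorem vecMul_mem_stdSimplex (hq0 : ∀ y y', 0 ≤ q y y') (hq : ∀ y, ∑ y', q y y' = 1)
    {π : L → ℝ} (hπ : π ∈ stdSimplex ℝ L) : π ᵥ* q ∈ stdSimplex ℝ L := by
  refine ⟨fun y' => sum_nonneg fun y _ => mul_nonneg (hπ.1 y) (hq0 y y'), ?_⟩
  simp only [vecMul, dotProduct]
  rw [sum_comm]
  simp only [← mul_sum, hq, mul_one, hπ.2]

theorem exists_mem_stdSimplex_vecMul_eq_self (hq0 : ∀ y y', 0 ≤ q y y')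
    (hq : ∀ y, ∑ y', q y y' = 1) (hm : ∀ y y', m y' ≤ q y y') (hm_pos : 0 < ∑ y, m y) :
    ∃ π ∈ stdSimplex ℝ L, π ᵥ* q = π := by
  obtain ⟨y₀, -, -⟩ := exists_ne_zero_of_sum_ne_zero hm_pos.ne'
  have hm_le : ∑ y, m y ≤ 1 := hq y₀ ▸ sum_le_sum fun y' _ => hm y₀ y'
  let s : Set (WithLp 1 (L → ℝ)) := WithLp.ofLp ⁻¹' stdSimplex ℝ L
  let f : WithLp 1 (L → ℝ) → WithLp 1 (L → ℝ) := fun π => WithLp.toLp 1 (π.ofLp ᵥ* q)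
  have hdist (π π' : WithLp 1 (L → ℝ)) : dist π π' = ∑ y, |π.ofLp y - π'.ofLp y| := by
    rw [dist_eq_norm, PiLp.norm_eq_of_L1]
    simp
  have hsf : Set.MapsTo f s s := fun π hπ => vecMul_mem_stdSimplex hq0 hq hπ
  have hc : ((1 - ∑ y, m y).toNNReal : ℝ) = 1 - ∑ y, m y :=
    Real.coe_toNNReal _ (sub_nonneg.2 hm_le)
  have hf : ContractingWith (1 - ∑ y, m y).toNNReal (hsf.restrict f s s) := by
    refine ⟨by rw [← NNReal.coe_lt_coe, hc, NNReal.coe_one]; linarith,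
      LipschitzWith.of_dist_le_mul fun π π' => ?_⟩
    have := sum_abs_vecMul_le_of_sum_eq_zero hq hm (v := π.1.ofLp - π'.1.ofLp)
      (by simp only [Pi.sub_apply, sum_sub_distrib, π.2.2, π'.2.2, sub_self])
    rw [hc]
    simpa [Subtype.dist_eq, hdist, f, sub_vecMul] using this
  obtain ⟨π, hπ, hfix, -⟩ := hf.exists_fixedPoint'
    ((isClosed_stdSimplex ℝ L).preimage (PiLp.continuous_ofLp 1 _)).isComplete hsf
    (x := WithLp.toLp 1 (q y₀)) ⟨hq0 y₀, hq y₀⟩ (edist_ne_top _ _)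
  exact ⟨π.ofLp, hπ, congrArg WithLp.ofLp hfix⟩

theorem eq_of_vecMul_eq_self (hq : ∀ y, ∑ y', q y y' = 1) (hm : ∀ y y', m y' ≤ q y y')
    (hm_pos : 0 < ∑ y, m y) {π π' : L → ℝ} (hπ : ∑ y, π y = 1) (hπ' : π' ∈ stdSimplex ℝ L)
    (hπq : π ᵥ* q = π) (hπq' : π' ᵥ* q = π') : π = π' := by
  have hbound := mul_sum_abs_sub_le_of_vecMul_eq_self hq hm hπ hπ' hπq hπq' (ε := 0)
    (by simp)
  have hzero : ∑ y, |π y - π' y| = 0 :=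
    le_antisymm (nonpos_of_mul_nonpos_right (by simpa using hbound) hm_pos) (by positivity)
  funext y
  rw [sum_eq_zero_iff_of_nonneg fun _ _ => abs_nonneg _] at hzero
  exact sub_eq_zero.1 (abs_eq_zero.1 (hzero y (mem_univ y)))

end Doeblin

theorem stationary_distribution_lipschitz
    {L : Type*} [Fintype L] [Nonempty L] (K δ : ℝ) (hδ : 0 < δ) :
    ∃ K' : ℝ, ∀ (d : ℕ) (p : EuclideanSpace ℝ (Fin d) → L → L → ℝ),
      (∀ x y y', 0 ≤ p x y y') →
      (∀ x y, ∑ y', p x y y' = 1) →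
      (∀ x x' y y', |p x y y' - p x' y y'| ≤ K * ‖x - x'‖) →
      (∀ x y y', δ ≤ p x y y') →
      ∃ π : EuclideanSpace ℝ (Fin d) → L → ℝ,
        (∀ x, (∀ y, 0 ≤ π x y) ∧ (∑ y, π x y = 1) ∧
          (∀ y', ∑ y, π x y * p x y y' = π x y')) ∧
        (∀ x (π' : L → ℝ), (∀ y, 0 ≤ π' y) → (∑ y, π' y = 1) →
          (∀ y', ∑ y, π' y * p x y y' = π' y') → π' = π x) ∧
        (∀ x x', ∑ y, |π x y - π x' y| ≤ K' * ‖x - x'‖) := by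
  refine ⟨K / δ, fun d p hpos hsum hlip hlb => ?_⟩
  have hcard : (0 : ℝ) < Fintype.card L := Nat.cast_pos.2 Fintype.card_pos
  have hmass : 0 < ∑ _y : L, δ := by
    rw [sum_const, card_univ, nsmul_eq_mul]
    positivity
  choose π hπ hπp using fun x =>
    exists_mem_stdSimplex_vecMul_eq_self (m := fun _ => δ) (hpos x) (hsum x) (hlb x) hmass
  refine ⟨π, fun x => ⟨(hπ x).1, (hπ x).2, congrFun (hπp x)⟩,
    fun x π' _ h1 hπ' => eq_of_vecMul_eq_self (hsum x) (hlb x) hmass h1 (hπ x) (funext hπ')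
      (hπp x), fun x x' => ?_⟩
  have hbound := mul_sum_abs_sub_le_of_vecMul_eq_self (m := fun _ => δ) (hsum x) (hlb x)
    (hπ x).2 (hπ x') (hπp x) (hπp x') (hlip x x')
  rw [sum_const, card_univ, nsmul_eq_mul, mul_assoc] at hbound
  rw [div_mul_eq_mul_div, le_div_iff₀ hδ]
  linarith [le_of_mul_le_mul_left hbound hcard]
end
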